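/- arXiv:2202.06761 — 2 statements merged into one kernel-verified Lean document; each statement's English description precedes it below -/
import Mathlib

section
/- Let H be a separable real Hilbert space, T > 0, and let X : H → D_T(ℝ) be a continuous linear map, where X(h) = {X_t(h)}_{t∈[0,T]} and D_T(ℝ) carries the topology of uniform convergence in probability. Then for every δ > 0 there exists ρ > 0 such that for every h ∈ H, E( sup_{t∈[0,T]} |1 − e^{iX_t(h)}| ) ≤ δ + 2‖h‖²/ρ². -/
/-!
Since `|1 - e^{ix}| ≤ min 2 |x|`, the integrand is at most `δ/2` outside the event that
`sup_t |X_t(h)| ≥ δ/2`, and at most `2` on it. By homogeneity `X_t(0) = 0` a.s. for each `t`,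
hence, by right-continuity of the paths along the rationals, for all `t` simultaneously; so
continuity of `X` at `0` makes that event have probability at most `δ/4` once `‖h‖ ≤ ρ`.
For `‖h‖ > ρ` the term `‖h‖²/ρ²` exceeds `1` and the bound is trivial.
-/

open MeasureTheory ProbabilityTheory Filter Set
open scoped ENNReal NNReal Topology RealInnerProductSpace

noncomputable section

/-- A function indexed by `ℝ≥0` is càdlàg if it is right-continuous and has left limits. -/
def Cadlag {E : Type*} [TopologicalSpace E] (f : ℝ≥0 → E) : Prop :=
  ∀ t : ℝ≥0, ContinuousWithinAt f (Set.Ici t) t ∧ ∃ l, Filter.Tendsto f (𝓝[<] t) (𝓝 l)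

/-- A cylindrical random variable over `H`: a linear map into (equivalence classes of)
real random variables. -/
def IsCylindrical {H Ω : Type*} [NormedAddCommGroup H] [InnerProductSpace ℝ H]
    [MeasurableSpace Ω] (P : Measure Ω) (X : H → Ω → ℝ) : Prop :=
  (∀ h : H, Measurable (X h)) ∧
  (∀ h h' : H, X (h + h') =ᵐ[P] fun ω => X h ω + X h' ω) ∧
  (∀ (c : ℝ) (h : H), X (c • h) =ᵐ[P] fun ω => c * X h ω)

/-- Continuity of a cylindrical random variable `X : H → L⁰(Ω,F,P)`, where `L⁰` carries the
topology of convergence in probability (sequential formulation). -/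
def ContinuousInProbability {H Ω : Type*} [NormedAddCommGroup H] [InnerProductSpace ℝ H]
    [MeasurableSpace Ω] (P : Measure Ω) (X : H → Ω → ℝ) : Prop :=
  ∀ (hs : ℕ → H) (h₀ : H), Filter.Tendsto hs Filter.atTop (𝓝 h₀) →
    MeasureTheory.TendstoInMeasure P (fun n => X (hs n)) Filter.atTop (X h₀)

/-- `S` is a Hilbert–Schmidt operator: `∑ ‖S eₙ‖² < ∞` for some complete orthonormal system. -/
def IsHilbertSchmidt {H G : Type*} [NormedAddCommGroup H] [InnerProductSpace ℝ H]
    [NormedAddCommGroup G] [InnerProductSpace ℝ G] (S : H →L[ℝ] G) : Prop :=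
  ∃ (ι : Type) (_ : Countable ι) (b : HilbertBasis ι ℝ H),
    Summable fun i => ‖S (b i)‖ ^ 2


/-- A function `f : ℝ → E` is càdlàg on `[0,T]`: right-continuous (within `[0,T]`) and with
left limits (within `[0,T]`) at every point of `[0,T]`. -/
def CadlagOn {E : Type*} [TopologicalSpace E] (f : ℝ → E) (T : ℝ) : Prop :=
  ∀ t ∈ Set.Icc (0 : ℝ) T,
    ContinuousWithinAt f (Set.Icc (0 : ℝ) T ∩ Set.Ici t) t ∧
    ∃ l, Filter.Tendsto f (𝓝[Set.Icc (0 : ℝ) T ∩ Set.Iio t] t) (𝓝 l)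

open Complex in
lemma iSup_norm_one_sub_exp_I_mul_ofReal_le_two {ι : Sort*} (x : ι → ℝ) :
    ⨆ i, ‖1 - exp (I * x i)‖ ≤ 2 := by
  refine Real.iSup_le (fun i => (norm_sub_le _ _).trans ?_) zero_le_two
  rw [norm_one, norm_exp_I_mul_ofReal]
  norm_num

open Complex in
lemma iSup_norm_one_sub_exp_I_mul_ofReal_le {ι : Sort*} {x : ι → ℝ} {η : ℝ} (hη : 0 ≤ η)
    (hx : ∀ i, |x i| ≤ η) : ⨆ i, ‖1 - exp (I * x i)‖ ≤ η := by
  refine Real.iSup_le (fun i => ?_) hη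
  rw [norm_sub_rev]
  exact Real.norm_exp_I_mul_ofReal_sub_one_le.trans ((Real.norm_eq_abs _).trans_le (hx i))

lemma eq_const_on_Icc_of_eq_const_on_rat {E : Type*} [TopologicalSpace E] [T1Space E]
    {f : ℝ → E} {a b : ℝ} {c : E}
    (hf : ∀ t ∈ Icc a b, ContinuousWithinAt f (Icc a b ∩ Ici t) t)
    (hc : ∀ t ∈ Icc a b ∩ insert b (range ((↑) : ℚ → ℝ)), f t = c) :
    ∀ t ∈ Icc a b, f t = c := by
  intro t ht
  rcases ht.2.eq_or_lt with rfl | htb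
  · exact hc t ⟨ht, mem_insert t _⟩
  set s := Ioo t b ∩ range ((↑) : ℚ → ℝ)
  have hts : t ∈ closure s := by
    have : Ioo t b ⊆ closure s := Rat.denseRange_cast.open_subset_closure_inter isOpen_Ioo
    refine closure_minimal this isClosed_closure ?_
    rw [closure_Ioo htb.ne]
    exact left_mem_Icc.2 htb.le
  have hsub : s ⊆ Icc a b ∩ Ici t := fun x hx => ⟨⟨ht.1.trans hx.1.1.le, hx.1.2.le⟩, hx.1.1.le⟩
  have hfs : MapsTo f s {c} := fun x hx => hc x ⟨(hsub hx).1, mem_insert_of_mem _ hx.2⟩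
  simpa using ((hf t ht).mono hsub).mem_closure hts hfs

lemma IsCylindrical.ae_map_zero {H Ω : Type*} [NormedAddCommGroup H] [InnerProductSpace ℝ H]
    [MeasurableSpace Ω] {P : Measure Ω} {Y : H → Ω → ℝ} (hY : IsCylindrical P Y) :
    ∀ᵐ ω ∂P, Y 0 ω = 0 := by
  filter_upwards [hY.2.2 0 0] with ω hω
  simpa using hω

lemma ae_forall_Icc_map_zero_eq_zero {H Ω : Type*} [NormedAddCommGroup H]
    [InnerProductSpace ℝ H] [MeasurableSpace Ω] {P : Measure Ω} {T : ℝ} {X : ℝ → H → Ω → ℝ}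
    (hlin : ∀ t ∈ Icc (0 : ℝ) T, IsCylindrical P (X t))
    (hpath : ∀ᵐ ω ∂P, CadlagOn (fun t => X t 0 ω) T) :
    ∀ᵐ ω ∂P, ∀ t ∈ Icc (0 : ℝ) T, X t 0 ω = 0 := by
  have hD : (Icc 0 T ∩ insert T (range ((↑) : ℚ → ℝ))).Countable :=
    ((countable_range _).insert T).mono inter_subset_right
  have hzero := (ae_ball_iff hD).2 fun t ht => (hlin t ht.1).ae_map_zero
  filter_upwards [hzero, hpath] with ω hω hcad
  exact eq_const_on_Icc_of_eq_const_on_rat (fun t ht => (hcad t ht).1) hω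

lemma exists_measure_le_add_sq_div_sq {E Ω : Type*} [SeminormedAddCommGroup E]
    [MeasurableSpace Ω] {μ : Measure Ω} [IsProbabilityMeasure μ] {A : E → Set Ω}
    (hA : Tendsto (fun x => μ (A x)) (𝓝 0) (𝓝 0)) {η : ℝ} (hη : 0 < η) :
    ∃ ρ > 0, ∀ x, μ (A x) ≤ ENNReal.ofReal (η + ‖x‖ ^ 2 / ρ ^ 2) := by
  obtain ⟨ρ, hρ, hsmall⟩ := Metric.nhds_basis_closedBall.eventually_iff.1
    (hA.eventually_le_const (ENNReal.ofReal_pos.2 hη))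
  refine ⟨ρ, hρ, fun x => ?_⟩
  by_cases hx : ‖x‖ ≤ ρ
  · exact (hsmall (mem_closedBall_zero_iff.2 hx)).trans
      (ENNReal.ofReal_le_ofReal (le_add_of_nonneg_right (by positivity)))
  · have hρx : 1 ≤ ‖x‖ ^ 2 / ρ ^ 2 := by
      rw [one_le_div (by positivity)]
      exact pow_le_pow_left₀ hρ.le (not_le.1 hx).le 2
    calc μ (A x) ≤ ENNReal.ofReal 1 := by rw [ENNReal.ofReal_one]; exact prob_le_one
      _ ≤ ENNReal.ofReal (η + ‖x‖ ^ 2 / ρ ^ 2) := ENNReal.ofReal_le_ofReal (by linarith)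

lemma lintegral_le_add_mul_measure {Ω : Type*} [MeasurableSpace Ω] {μ : Measure Ω}
    [IsProbabilityMeasure μ] {f : Ω → ℝ≥0∞} {a M : ℝ≥0∞} {S : Set Ω}
    (hM : ∀ ω, f ω ≤ M) (ha : ∀ ω ∉ S, f ω ≤ a) :
    ∫⁻ ω, f ω ∂μ ≤ a + M * μ S := by
  have hf : ∀ ω, f ω ≤ a + S.indicator (fun _ => M) ω := by
    intro ω
    by_cases hω : ω ∈ S
    · simpa [hω] using le_add_left (hM ω)
    · simpa [hω] using ha ω hω
  calc ∫⁻ ω, f ω ∂μ ≤ ∫⁻ ω, a + S.indicator (fun _ => M) ω ∂μ := lintegral_mono hf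
    _ ≤ a + M * μ S := by
      rw [lintegral_add_left measurable_const, lintegral_const, measure_univ, mul_one]
      exact add_le_add_right (lintegral_indicator_const_le S M) a

theorem gaussian_bound_of_continuous_general
    {H Ω : Type} [NormedAddCommGroup H] [InnerProductSpace ℝ H]
    [MeasurableSpace Ω] (P : Measure Ω) [IsProbabilityMeasure P]
    (T : ℝ)
    (X : ℝ → H → Ω → ℝ)
    (hlin : ∀ t ∈ Set.Icc (0 : ℝ) T, IsCylindrical P (X t))
    (hpath : ∀ h : H, ∀ᵐ ω ∂P, CadlagOn (fun t => X t h ω) T)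
    -- continuity of `X : H → D_T(ℝ)` for the topology of uniform convergence in probability
    (hXcont : ∀ (hs : ℕ → H) (h₀ : H), Filter.Tendsto hs Filter.atTop (𝓝 h₀) →
      ∀ ε : ℝ, 0 < ε →
        Filter.Tendsto
          (fun n => P {ω | ∃ t ∈ Set.Icc (0 : ℝ) T, ε ≤ |X t (hs n) ω - X t h₀ ω|})
          Filter.atTop (𝓝 0)) :
    ∀ δ : ℝ, 0 < δ → ∃ ρ : ℝ, 0 < ρ ∧ ∀ h : H,
      ∫⁻ ω, ENNReal.ofReal
          (⨆ t : Set.Icc (0 : ℝ) T, ‖1 - Complex.exp (Complex.I * (X t h ω : ℂ))‖) ∂P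
        ≤ ENNReal.ofReal (δ + 2 * ‖h‖ ^ 2 / ρ ^ 2) := by
  intro δ hδ
  set S : H → Set Ω := fun h => {ω | ∃ t ∈ Icc (0 : ℝ) T, δ / 2 ≤ |X t h ω|}
  have hS : Tendsto (fun h => P (S h)) (𝓝 0) (𝓝 0) := by
    refine tendsto_nhds_iff_seq_tendsto.2 fun hs hs0 =>
      (hXcont hs 0 hs0 (δ / 2) (half_pos hδ)).congr fun n => measure_congr ?_
    filter_upwards [ae_forall_Icc_map_zero_eq_zero hlin (hpath 0)] with ω hω
    refine propext (exists_congr fun t => and_congr_right fun ht => ?_)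
    rw [hω t ht, sub_zero]
  obtain ⟨ρ, hρ, hSρ⟩ := exists_measure_le_add_sq_div_sq hS (η := δ / 4) (by positivity)
  refine ⟨ρ, hρ, fun h => ?_⟩
  calc _ ≤ ENNReal.ofReal (δ / 2) + 2 * P (S h) := by
        refine lintegral_le_add_mul_measure (fun ω => ?_) (fun ω hω => ?_)
        · rw [← ENNReal.ofReal_ofNat]
          exact ENNReal.ofReal_le_ofReal (iSup_norm_one_sub_exp_I_mul_ofReal_le_two _)
        · exact ENNReal.ofReal_le_ofReal (iSup_norm_one_sub_exp_I_mul_ofReal_le (by positivity)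
            fun t => (not_le.1 fun h' => hω ⟨t, t.2, h'⟩).le)
    _ ≤ ENNReal.ofReal (δ / 2) + ENNReal.ofReal 2 * ENNReal.ofReal (δ / 4 + ‖h‖ ^ 2 / ρ ^ 2) := by
        rw [ENNReal.ofReal_ofNat]
        gcongr
        exact hSρ h
    _ = ENNReal.ofReal (δ + 2 * ‖h‖ ^ 2 / ρ ^ 2) := by
        rw [← ENNReal.ofReal_mul zero_le_two, ← ENNReal.ofReal_add (by positivity) (by positivity)]
        ring_nf

/-- If `X : H → D_T(ℝ)` is a continuous linear map into the space of càdlàg processes on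
`[0,T]` with the topology of uniform convergence in probability, then for every `δ > 0`
there is `ρ > 0` such that for every `h ∈ H`,
`E(sup_{t ∈ [0,T]} |1 - e^{i X_t(h)}|) ≤ δ + 2‖h‖²/ρ²`. -/
theorem gaussian_bound_of_continuous
    {H Ω : Type} [NormedAddCommGroup H] [InnerProductSpace ℝ H] [CompleteSpace H]
    [TopologicalSpace.SeparableSpace H]
    [MeasurableSpace Ω] (P : Measure Ω) [IsProbabilityMeasure P] (hPcomp : P.IsComplete)
    (T : ℝ) (hT : 0 < T)
    (X : ℝ → H → Ω → ℝ)
    (hlin : ∀ t ∈ Set.Icc (0 : ℝ) T, IsCylindrical P (X t))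
    (hpath : ∀ h : H, ∀ᵐ ω ∂P, CadlagOn (fun t => X t h ω) T)
    -- continuity of `X : H → D_T(ℝ)` for the topology of uniform convergence in probability
    (hXcont : ∀ (hs : ℕ → H) (h₀ : H), Filter.Tendsto hs Filter.atTop (𝓝 h₀) →
      ∀ ε : ℝ, 0 < ε →
        Filter.Tendsto
          (fun n => P {ω | ∃ t ∈ Set.Icc (0 : ℝ) T, ε ≤ |X t (hs n) ω - X t h₀ ω|})
          Filter.atTop (𝓝 0)) :
    ∀ δ : ℝ, 0 < δ → ∃ ρ : ℝ, 0 < ρ ∧ ∀ h : H,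
      ∫⁻ ω, ENNReal.ofReal
          (⨆ t : Set.Icc (0 : ℝ) T, ‖1 - Complex.exp (Complex.I * (X t h ω : ℂ))‖) ∂P
        ≤ ENNReal.ofReal (δ + 2 * ‖h‖ ^ 2 / ρ ^ 2) :=
  gaussian_bound_of_continuous_general P T X hlin hpath hXcont
end
end

section
/- Let H be a separable real Hilbert space, T > 0, and let X = {X_t}_{t∈[0,T]} be a cylindrical process over H with càdlàg paths (for every h ∈ H, {X_t(h)}_{t∈[0,T]} is càdlàg) such that for every t ∈ [0,T] the linear map X_t : H → L⁰(Ω,F,P) is continuous. Then the linear map X : H → D_T(ℝ), h ↦ {X_t(h)}_{t∈[0,T]}, is continuous, where D_T(ℝ) carries the topology of uniform convergence in probability. -/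
/-!
Choose a countable set `D ⊆ [0,T]` approximating every point of `[0,T]` from the right. By
right-continuity of the paths, `sup_{t ≤ T} |X_t h|` is almost surely `sup_{t ∈ D} |X_t h|`, so
it suffices to show that `Φ h = 𝔼 [sup_{t ∈ D} min (1, |X_t h|)]` tends to `0` as `h → 0`. The
functional `Φ` is subadditive, lower semicontinuous (the supremum of its truncations to finite
subsets of `D`, which are continuous because each `X_t` is continuous in probability), and
`Φ (c • h) → 0` as `c → 0` because càdlàg paths are bounded. As in the closed graph theorem, a
Baire category argument on the complete space `H` turns these properties into continuity of `Φ`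
at `0`.
-/

open MeasureTheory ProbabilityTheory Filter Set
open scoped ENNReal NNReal Topology RealInnerProductSpace

noncomputable section

theorem min_one_enorm_add_le {E : Type*} [TopologicalSpace E] [ESeminormedAddMonoid E]
    (a b : E) : min 1 ‖a + b‖ₑ ≤ min 1 ‖a‖ₑ + min 1 ‖b‖ₑ := by
  rcases le_total 1 ‖a‖ₑ with ha | ha
  · exact (min_le_left _ _).trans (by simp [ha])
  rcases le_total 1 ‖b‖ₑ with hb | hb
  · exact (min_le_left _ _).trans (by simp [hb])
  rw [min_eq_right ha, min_eq_right hb]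
  exact (min_le_right _ _).trans (enorm_add_le a b)

theorem tendsto_lintegral_min_one_edist {α E ι : Type*} [MeasurableSpace α] {μ : Measure α}
    [IsFiniteMeasure μ] [EDist E] {l : Filter ι} {f : ι → α → E} {g : α → E}
    (hf : TendstoInMeasure μ f l g) :
    Tendsto (fun i => ∫⁻ x, min 1 (edist (f i x) (g x)) ∂μ) l (𝓝 0) := by
  refine ENNReal.tendsto_nhds_zero.2 fun ε hε => ?_
  obtain ⟨δ, hδ, hδμ⟩ := ENNReal.exists_pos_mul_lt (measure_ne_top μ univ)
    (ENNReal.half_pos hε.ne').ne'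
  filter_upwards [(ENNReal.tendsto_nhds_zero.1 (hf δ hδ)) (ε / 2) (ENNReal.half_pos hε.ne')]
    with i hi
  set S := {x | δ ≤ edist (f i x) (g x)}
  have hpt : ∀ x, min 1 (edist (f i x) (g x)) ≤ δ + S.indicator 1 x := by
    intro x
    by_cases hx : x ∈ S
    · simp [indicator_of_mem hx]
    · exact (min_le_right _ _).trans ((not_le.1 hx).le.trans le_self_add)
  calc ∫⁻ x, min 1 (edist (f i x) (g x)) ∂μ ≤ ∫⁻ x, δ + S.indicator 1 x ∂μ :=
        lintegral_mono hpt
    _ = δ * μ univ + ∫⁻ x, S.indicator 1 x ∂μ := by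
        rw [lintegral_add_left measurable_const, lintegral_const]
    _ ≤ ε / 2 + ε / 2 := add_le_add hδμ.le ((lintegral_indicator_one_le S).trans hi)
    _ = ε := ENNReal.add_halves ε

theorem exists_countable_rightDense (T : ℝ) :
    ∃ D : Set ℝ, D.Countable ∧ D ⊆ Icc 0 T ∧ ∀ t ∈ Icc 0 T, t ∈ closure (D ∩ Ici t) := by
  set Q := range ((↑) : ℚ → ℝ)
  refine ⟨Icc 0 T ∩ insert T Q, (countable_range _).insert T |>.mono inter_subset_right,
    inter_subset_left, fun t ht => ?_⟩
  rcases ht.2.eq_or_lt with rfl | htT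
  · exact subset_closure ⟨⟨ht, mem_insert _ _⟩, self_mem_Ici⟩
  have hIoo : Ioo t T ∩ Q ⊆ (Icc 0 T ∩ insert T Q) ∩ Ici t :=
    fun s ⟨hs, hq⟩ => ⟨⟨⟨ht.1.trans hs.1.le, hs.2.le⟩, mem_insert_of_mem _ hq⟩, hs.1.le⟩
  refine closure_mono hIoo ?_
  have := Rat.denseRange_cast.open_subset_closure_inter (isOpen_Ioo (a := t) (b := T))
  exact closure_minimal this isClosed_closure (by rw [closure_Ioo htT.ne]; exact ⟨le_rfl, htT.le⟩)

namespace CadlagOn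

variable {E : Type*} {f g : ℝ → E} {T : ℝ}

theorem isBounded_image [PseudoMetricSpace E] (hf : CadlagOn f T) :
    Bornology.IsBounded (f '' Icc 0 T) := by
  refine isCompact_Icc.induction_on (p := fun s => Bornology.IsBounded (f '' s)) (by simp)
    (fun s t hst ht => ht.subset (image_mono hst))
    (fun s t hs ht => by simpa [image_union] using hs.union ht) fun t ht => ?_
  obtain ⟨hright, l, hleft⟩ := hf t ht
  have hsplit : 𝓝[Icc 0 T] t = 𝓝[Icc 0 T ∩ Ici t] t ⊔ 𝓝[Icc 0 T ∩ Iio t] t := by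
    rw [← nhdsWithin_union, ← inter_union_distrib_left, Ici_union_Iio, inter_univ]
  have hball : ∀ᶠ s in 𝓝[Icc 0 T] t, f s ∈ Metric.ball (f t) 1 ∪ Metric.ball l 1 := by
    rw [hsplit, eventually_sup]
    exact ⟨(hright.eventually_mem (Metric.ball_mem_nhds _ one_pos)).mono fun _ h => Or.inl h,
      (hleft.eventually_mem (Metric.ball_mem_nhds _ one_pos)).mono fun _ h => Or.inr h⟩
  exact ⟨_, hball, (Metric.isBounded_ball.union Metric.isBounded_ball).subset
    (image_subset_iff.2 fun _ h => h)⟩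

theorem mem_of_forall_mem [TopologicalSpace E] (hf : CadlagOn f T) {D : Set ℝ}
    (hDT : D ⊆ Icc 0 T) (hD : ∀ t ∈ Icc 0 T, t ∈ closure (D ∩ Ici t)) {C : Set E}
    (hC : IsClosed C) (hDC : ∀ s ∈ D, f s ∈ C) : ∀ t ∈ Icc 0 T, f t ∈ C := by
  intro t ht
  have hcont := (hf t ht).1.mono (inter_subset_inter_left _ hDT)
  exact hC.closure_subset_iff.2 (image_subset_iff.2 fun s hs => hDC s hs.1)
    (hcont.mem_closure_image (hD t ht))

theorem sub [TopologicalSpace E] [AddGroup E] [IsTopologicalAddGroup E] (hf : CadlagOn f T)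
    (hg : CadlagOn g T) : CadlagOn (fun t => f t - g t) T := fun t ht =>
  have ⟨l, hl⟩ := (hf t ht).2
  have ⟨l', hl'⟩ := (hg t ht).2
  ⟨(hf t ht).1.sub (hg t ht).1, l - l', hl.sub hl'⟩

theorem iSup_enorm_ne_top [SeminormedAddCommGroup E] (hf : CadlagOn f T) {D : Set ℝ}
    (hDT : D ⊆ Icc 0 T) : ⨆ t : D, ‖f t‖ₑ ≠ ∞ := by
  obtain ⟨C, hC⟩ := isBounded_iff_forall_norm_le.1 hf.isBounded_image
  refine ne_top_of_le_ne_top (ENNReal.ofReal_ne_top (r := C)) (iSup_le fun t => ?_)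
  rw [← ofReal_norm]
  exact ENNReal.ofReal_le_ofReal (hC _ (mem_image_of_mem f (hDT t.2)))

end CadlagOn

theorem LowerSemicontinuous.tendsto_nhds_zero_of_sub_le {E : Type*} [AddCommGroup E] [Module ℝ E]
    [TopologicalSpace E] [IsTopologicalAddGroup E] [ContinuousSMul ℝ E] [BaireSpace E]
    {Φ : E → ℝ≥0∞} (hΦ : LowerSemicontinuous Φ) (hsub : ∀ a b, Φ (a - b) ≤ Φ a + Φ b)
    (hsmul : ∀ h, Tendsto (fun c : ℝ => Φ (c • h)) (𝓝 0) (𝓝 0)) : Tendsto Φ (𝓝 0) (𝓝 0) := by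
  refine ENNReal.tendsto_nhds_zero.2 fun η hη => ?_
  have hδ : 0 < η / 2 := ENNReal.half_pos hη.ne'
  set c : ℕ → ℝ := fun m => ((m + 1 : ℕ) : ℝ)⁻¹
  have hc : Tendsto c atTop (𝓝 0) :=
    (tendsto_inv_atTop_nhds_zero_nat (𝕜 := ℝ)).comp (tendsto_add_atTop_nat 1)
  set S : ℕ → Set E := fun m => (c m • ·) ⁻¹' (Φ ⁻¹' Iic (η / 2))
  have hS : ∀ m, IsClosed (S m) := fun m =>
    (hΦ.isClosed_preimage _).preimage (continuous_const_smul _)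
  have hcover : ⋃ m, S m = univ := eq_univ_of_forall fun h =>
    mem_iUnion.2 (ENNReal.tendsto_nhds_zero.1 ((hsmul h).comp hc) _ hδ).exists
  obtain ⟨m, x, hx⟩ := nonempty_interior_of_iUnion_of_closed hS hcover
  have hcm : c m ≠ 0 := inv_ne_zero (Nat.cast_ne_zero.2 m.succ_ne_zero)
  have hnear : ∀ᶠ v in 𝓝 (0 : E), x + (c m)⁻¹ • v ∈ S m := by
    have : Tendsto (fun v : E => x + (c m)⁻¹ • v) (𝓝 0) (𝓝 x) := by
      simpa using tendsto_const_nhds.add ((continuous_const_smul (c m)⁻¹).tendsto (0 : E))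
    exact this.eventually_mem (mem_interior_iff_mem_nhds.1 hx)
  filter_upwards [hnear] with v hv
  calc Φ v = Φ (c m • (x + (c m)⁻¹ • v) - c m • x) := by
        rw [smul_add, smul_smul, mul_inv_cancel₀ hcm, one_smul, add_sub_cancel_left]
    _ ≤ η / 2 + η / 2 := (hsub _ _).trans (add_le_add hv (interior_subset (s := S m) hx))
    _ = η := ENNReal.add_halves η

theorem IsCylindrical.sub_ae {H Ω : Type*} [NormedAddCommGroup H] [InnerProductSpace ℝ H]
    [MeasurableSpace Ω] {P : Measure Ω} {X : H → Ω → ℝ} (hX : IsCylindrical P X) (a b : H) :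
    X (a - b) =ᵐ[P] fun ω => X a ω - X b ω := by
  filter_upwards [hX.2.1 b (a - b)] with ω hω
  rw [add_sub_cancel] at hω
  rw [hω, add_sub_cancel_left]

section UcpGauge

variable {ι H Ω : Type*} [MeasurableSpace Ω] {P : Measure Ω} {Y : ι → H → Ω → ℝ}

def ucpSup (Y : ι → H → Ω → ℝ) (h : H) (ω : Ω) : ℝ≥0∞ :=
  ⨆ i, min 1 ‖Y i h ω‖ₑ

/-- The F-norm of uniform convergence in probability, over the index set `ι`. -/
def ucpGauge (P : Measure Ω) (Y : ι → H → Ω → ℝ) (h : H) : ℝ≥0∞ :=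
  ∫⁻ ω, ucpSup Y h ω ∂P

theorem measurable_ucpSup [Countable ι] (hY : ∀ i h, Measurable (Y i h)) (h : H) :
    Measurable (ucpSup Y h) :=
  .iSup fun i => measurable_const.min (hY i h).enorm

theorem ucpGauge_le_add_sum [Fintype ι] (hY : ∀ i h, Measurable (Y i h)) (p u : H) :
    ucpGauge P Y p ≤ ucpGauge P Y u + ∑ i, ∫⁻ ω, min 1 (edist (Y i u ω) (Y i p ω)) ∂P := by
  have hpt : ∀ ω, ucpSup Y p ω ≤ ucpSup Y u ω + ∑ i, min 1 (edist (Y i u ω) (Y i p ω)) := by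
    refine fun ω => iSup_le fun i => ?_
    calc min 1 ‖Y i p ω‖ₑ = min 1 ‖Y i u ω + (Y i p ω - Y i u ω)‖ₑ := by rw [add_sub_cancel]
      _ ≤ min 1 ‖Y i u ω‖ₑ + min 1 (edist (Y i u ω) (Y i p ω)) := by
        rw [edist_comm, edist_eq_enorm_sub]; exact min_one_enorm_add_le _ _
      _ ≤ _ := add_le_add (le_iSup (fun i => min 1 ‖Y i u ω‖ₑ) i)
        (Finset.single_le_sum (f := fun i => min 1 (edist (Y i u ω) (Y i p ω)))
          (fun _ _ => zero_le) (Finset.mem_univ i))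
  calc ucpGauge P Y p ≤ ∫⁻ ω, ucpSup Y u ω + ∑ i, min 1 (edist (Y i u ω) (Y i p ω)) ∂P :=
        lintegral_mono hpt
    _ = _ := by
      rw [lintegral_add_left (measurable_ucpSup hY u),
        lintegral_finsetSum _ fun i _ => measurable_const.min ((hY i u).edist (hY i p))]
      rfl

theorem ucpGauge_eq_iSup_finset [Countable ι] (hY : ∀ i h, Measurable (Y i h)) (h : H) :
    ucpGauge P Y h = ⨆ s : Finset ι, ucpGauge P (fun i : s => Y i) h := by
  have hmono : Monotone fun (s : Finset ι) ω => ucpSup (fun i : s => Y i) h ω :=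
    fun s t hst ω => iSup_le fun i => le_iSup_of_le ⟨i, hst i.2⟩ le_rfl
  simp only [ucpGauge]
  rw [← lintegral_iSup_directed
    (fun s => (measurable_ucpSup (fun i : s => hY i) h).aemeasurable) hmono.directed_le]
  congr 1
  funext ω
  rw [ucpSup, iSup_eq_iSup_finset]
  simp only [ucpSup, iSup_subtype']

variable [NormedAddCommGroup H] [InnerProductSpace ℝ H]

theorem lowerSemicontinuous_ucpGauge_of_fintype [Fintype ι] [IsFiniteMeasure P]
    (hY : ∀ i h, Measurable (Y i h)) (hc : ∀ i, ContinuousInProbability P (Y i)) :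
    LowerSemicontinuous (ucpGauge P Y) := by
  refine lowerSemicontinuous_iff_isClosed_preimage.2 fun δ =>
    IsSeqClosed.isClosed fun u p hu hup => ?_
  have herr : Tendsto (fun n => ∑ i, ∫⁻ ω, min 1 (edist (Y i (u n) ω) (Y i p ω)) ∂P)
      atTop (𝓝 0) := by
    simpa using tendsto_finsetSum Finset.univ fun i _ =>
      tendsto_lintegral_min_one_edist (hc i u p hup)
  refine ge_of_tendsto (by simpa using (tendsto_const_nhds (x := δ)).add herr)
    (.of_forall fun n => ?_)
  exact (ucpGauge_le_add_sum hY p (u n)).trans (add_le_add_left (hu n) _)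

theorem lowerSemicontinuous_ucpGauge [Countable ι] [IsFiniteMeasure P]
    (hY : ∀ i h, Measurable (Y i h)) (hc : ∀ i, ContinuousInProbability P (Y i)) :
    LowerSemicontinuous (ucpGauge P Y) := by
  rw [funext (ucpGauge_eq_iSup_finset hY)]
  exact lowerSemicontinuous_iSup fun s =>
    lowerSemicontinuous_ucpGauge_of_fintype (fun i => hY i) fun i => hc i

theorem ucpGauge_sub_le [Countable ι] (hY : ∀ i, IsCylindrical P (Y i)) (a b : H) :
    ucpGauge P Y (a - b) ≤ ucpGauge P Y a + ucpGauge P Y b := by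
  rw [ucpGauge, ucpGauge, ucpGauge,
    ← lintegral_add_left (measurable_ucpSup (fun i => (hY i).1) a)]
  refine lintegral_mono_ae ?_
  filter_upwards [ae_all_iff.2 fun i => (hY i).sub_ae a b] with ω hω
  refine iSup_le fun i => ?_
  rw [hω i, sub_eq_add_neg]
  refine (min_one_enorm_add_le _ _).trans (add_le_add ?_ ?_)
  · exact le_iSup (fun i => min 1 ‖Y i a ω‖ₑ) i
  · exact enorm_neg (Y i b ω) ▸ le_iSup (fun i => min 1 ‖Y i b ω‖ₑ) i

theorem tendsto_ucpGauge_smul [Countable ι] [IsFiniteMeasure P]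
    (hY : ∀ i, IsCylindrical P (Y i)) {h : H} (hbdd : ∀ᵐ ω ∂P, ⨆ i, ‖Y i h ω‖ₑ ≠ ∞) :
    Tendsto (fun c : ℝ => ucpGauge P Y (c • h)) (𝓝 0) (𝓝 0) := by
  have hsmul : ∀ c : ℝ, ucpGauge P Y (c • h) = ∫⁻ ω, ⨆ i, min 1 (‖c‖ₑ * ‖Y i h ω‖ₑ) ∂P := by
    refine fun c => lintegral_congr_ae ?_
    filter_upwards [ae_all_iff.2 fun i => (hY i).2.2 c h] with ω hω
    simp only [ucpSup, hω, enorm_mul]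
  simp_rw [hsmul]
  have hpt : ∀ᵐ ω ∂P, Tendsto (fun c : ℝ => ⨆ i, min 1 (‖c‖ₑ * ‖Y i h ω‖ₑ)) (𝓝 0) (𝓝 0) := by
    filter_upwards [hbdd] with ω hω
    have hlin : Tendsto (fun c : ℝ => ‖c‖ₑ * ⨆ i, ‖Y i h ω‖ₑ) (𝓝 0) (𝓝 0) := by
      simpa using ENNReal.Tendsto.mul_const (continuous_enorm.tendsto (0 : ℝ)) (Or.inr hω)
    refine tendsto_of_tendsto_of_tendsto_of_le_of_le tendsto_const_nhds hlin (fun _ => zero_le)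
      fun c => iSup_le fun i => (min_le_right _ _).trans ?_
    gcongr
    exact le_iSup (fun i => ‖Y i h ω‖ₑ) i
  have hmeas : ∀ c : ℝ, Measurable fun ω => ⨆ i, min 1 (‖c‖ₑ * ‖Y i h ω‖ₑ) := fun c =>
    .iSup fun i => measurable_const.min (measurable_const.mul ((hY i).1 h).enorm)
  have := tendsto_lintegral_filter_of_dominated_convergence (μ := P) (f := fun _ => 0)
    (fun _ => 1) (.of_forall hmeas)
    (.of_forall fun c => ae_of_all _ fun ω => iSup_le fun i => min_le_left _ _) (by simp) hpt
  simpa using this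

end UcpGauge

theorem measure_exists_le_abs_sub_le_ucpGauge_div {H Ω : Type*} [NormedAddCommGroup H]
    [InnerProductSpace ℝ H] [MeasurableSpace Ω] {P : Measure Ω} {T : ℝ} {X : ℝ → H → Ω → ℝ}
    {D : Set ℝ} [Countable D] (hDT : D ⊆ Icc 0 T)
    (hD : ∀ t ∈ Icc 0 T, t ∈ closure (D ∩ Ici t)) (hcyl : ∀ t : D, IsCylindrical P (X t))
    {a b : H} (ha : ∀ᵐ ω ∂P, CadlagOn (fun t => X t a ω) T)
    (hb : ∀ᵐ ω ∂P, CadlagOn (fun t => X t b ω) T) {ε : ℝ} (hε : 0 < ε) :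
    P {ω | ∃ t ∈ Icc 0 T, ε ≤ |X t a ω - X t b ω|} ≤
      ucpGauge P (fun t : D => X t) (a - b) / min 1 (ENNReal.ofReal ε) := by
  have hc0 : min 1 (ENNReal.ofReal ε) ≠ 0 := by simp [hε]
  have hctop : min 1 (ENNReal.ofReal ε) ≠ ∞ :=
    ne_top_of_le_ne_top ENNReal.one_ne_top (min_le_left _ _)
  refine (measure_mono_ae ?_).trans (meas_ge_le_lintegral_div
    (measurable_ucpSup (fun t : D => (hcyl t).1) _).aemeasurable hc0 hctop)
  filter_upwards [ha, hb, ae_all_iff.2 fun t : D => (hcyl t).sub_ae a b]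
    with ω hωa hωb hω ⟨t, ht, hεt⟩
  have hC : IsClosed {x : ℝ | min 1 ‖x‖ₑ ≤ ucpSup (fun t : D => X t) (a - b) ω} :=
    isClosed_le (continuous_const.min continuous_enorm) continuous_const
  have hmem := (hωa.sub hωb).mem_of_forall_mem hDT hD hC
    (fun s hs => (hω ⟨s, hs⟩).symm ▸
      le_iSup (fun t : D => min 1 ‖X t (a - b) ω‖ₑ) ⟨s, hs⟩) t ht
  refine le_trans (min_le_min_left _ ?_) hmem
  rw [Real.enorm_eq_ofReal_abs]
  exact ENNReal.ofReal_le_ofReal hεt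

theorem inducedMap_continuous_general
    {H Ω : Type} [NormedAddCommGroup H] [InnerProductSpace ℝ H] [CompleteSpace H]
    [MeasurableSpace Ω] (P : Measure Ω) [IsProbabilityMeasure P]
    (T : ℝ)
    (X : ℝ → H → Ω → ℝ)
    (hcyl : ∀ t ∈ Set.Icc (0 : ℝ) T, IsCylindrical P (X t))
    (hpath : ∀ h : H, ∀ᵐ ω ∂P, CadlagOn (fun t => X t h ω) T)
    (hcont : ∀ t ∈ Set.Icc (0 : ℝ) T, ContinuousInProbability P (X t)) :
    ∀ (hs : ℕ → H) (h₀ : H), Filter.Tendsto hs Filter.atTop (𝓝 h₀) →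
      ∀ ε : ℝ, 0 < ε →
        Filter.Tendsto
          (fun n => P {ω | ∃ t ∈ Set.Icc (0 : ℝ) T, ε ≤ |X t (hs n) ω - X t h₀ ω|})
          Filter.atTop (𝓝 0) := by
  obtain ⟨D, hDc, hDT, hD⟩ := exists_countable_rightDense T
  have : Countable D := hDc.to_subtype
  have hcylD : ∀ t : D, IsCylindrical P (X t) := fun t => hcyl t (hDT t.2)
  have hΦ : Tendsto (ucpGauge P fun t : D => X t) (𝓝 0) (𝓝 0) :=
    (lowerSemicontinuous_ucpGauge (fun t => (hcylD t).1) fun t => hcont t (hDT t.2))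
      |>.tendsto_nhds_zero_of_sub_le (ucpGauge_sub_le hcylD) fun h =>
        tendsto_ucpGauge_smul hcylD <| (hpath h).mono fun ω hω => hω.iSup_enorm_ne_top hDT
  intro hs h₀ hlim ε hε
  have hdiff : Tendsto (fun n => hs n - h₀) atTop (𝓝 0) := by simpa using hlim.sub_const h₀
  refine tendsto_of_tendsto_of_tendsto_of_le_of_le tendsto_const_nhds
    (by simpa using ENNReal.Tendsto.div_const (hΦ.comp hdiff) (Or.inr (by simp [hε])))
    (fun _ => zero_le) fun n =>
      measure_exists_le_abs_sub_le_ucpGauge_div hDT hD hcylD (hpath _) (hpath _) hε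

/-- If `X = {X_t}_{t ∈ [0,T]}` is a cylindrical process with càdlàg paths such that each
`X_t : H → L⁰(Ω,F,P)` is continuous, then the induced linear map `X : H → D_T(ℝ)` is
continuous for the topology of uniform convergence in probability on `D_T(ℝ)`. -/
theorem inducedMap_continuous
    {H Ω : Type} [NormedAddCommGroup H] [InnerProductSpace ℝ H] [CompleteSpace H]
    [TopologicalSpace.SeparableSpace H]
    [MeasurableSpace Ω] (P : Measure Ω) [IsProbabilityMeasure P] (hPcomp : P.IsComplete)
    (T : ℝ) (hT : 0 < T)
    (X : ℝ → H → Ω → ℝ)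
    (hcyl : ∀ t ∈ Set.Icc (0 : ℝ) T, IsCylindrical P (X t))
    (hpath : ∀ h : H, ∀ᵐ ω ∂P, CadlagOn (fun t => X t h ω) T)
    (hcont : ∀ t ∈ Set.Icc (0 : ℝ) T, ContinuousInProbability P (X t)) :
    ∀ (hs : ℕ → H) (h₀ : H), Filter.Tendsto hs Filter.atTop (𝓝 h₀) →
      ∀ ε : ℝ, 0 < ε →
        Filter.Tendsto
          (fun n => P {ω | ∃ t ∈ Set.Icc (0 : ℝ) T, ε ≤ |X t (hs n) ω - X t h₀ ω|})
          Filter.atTop (𝓝 0) :=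
  inducedMap_continuous_general P T X hcyl hpath hcont
end
end
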